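/- The function V is continuous on [0,T]×ℝ; the partial derivatives ∂ₜV and ∂ₓV exist at every point of (0,T)×ℝ and are continuous there; and at every point (t,x) ∈ (0,T)×ℝ lying on the switching curve, i.e., with e^{r(T−t)}x + g₁(t) = 0, one has V(t,x) = 0, ∂ₜV(t,x) = 0, and ∂ₓV(t,x) = 0. -/

import Mathlib

/-!
Write `H = e^{r(T-t)} x + g₁(t)`. Then `V = ½ max(H,0)² + ½ e^{2A₁(T-t)} min(H,0)²`, and
`z ↦ max(z,0)²`, `z ↦ min(z,0)²` are `C¹` with derivatives `2 max(z,0)`, `2 min(z,0)`. So `V` is `C¹`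
by the chain rule, and each term of `V`, `∂ₜV`, `∂ₓV` has a factor `max(H,0)` or `min(H,0)`,
which vanishes on the switching curve `H = 0`.
-/

open Real Set

theorem hasDerivAt_max_zero_sq (u : ℝ) : HasDerivAt (fun y => max y 0 ^ 2) (2 * max u 0) u := by
  rcases lt_trichotomy u 0 with hu | rfl | hu
  · refine (hasDerivAt_const u (0 : ℝ)).congr_of_eventuallyEq ?_ |>.congr_deriv (by simp [hu.le])
    filter_upwards [Iio_mem_nhds hu] with y hy
    simp [hy.out.le]
  · have hIic : HasDerivWithinAt (fun y : ℝ => max y 0 ^ 2) 0 (Iic 0) 0 :=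
      (hasDerivWithinAt_const (0 : ℝ) _ (0 : ℝ)).congr (fun y hy => by simp [hy.out]) (by simp)
    have hIci : HasDerivWithinAt (fun y : ℝ => max y 0 ^ 2) 0 (Ici 0) 0 := by
      simpa using (hasDerivWithinAt_pow 2 (0 : ℝ) (s := Ici 0)).congr
        (fun y hy => by simp [hy.out]) (by simp)
    simpa [Iic_union_Ici] using hIic.union hIci
  · refine (hasDerivAt_pow 2 u).congr_of_eventuallyEq ?_ |>.congr_deriv (by simp [hu.le])
    filter_upwards [Ioi_mem_nhds hu] with y hy
    simp [hy.out.le]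

theorem hasDerivAt_min_zero_sq (u : ℝ) : HasDerivAt (fun y => min y 0 ^ 2) (2 * min u 0) u := by
  have hmin (y : ℝ) : min y 0 = -max (-y) 0 := by rw [← neg_zero, max_neg_neg, neg_neg, neg_zero]
  have h := (hasDerivAt_max_zero_sq (-u)).comp u (hasDerivAt_neg u)
  simp only [Function.comp_def] at h
  simp only [hmin, neg_sq]
  exact h.congr_deriv (by ring)

noncomputable def switchedHalfSq (c z : ℝ) : ℝ := max z 0 ^ 2 / 2 + c * min z 0 ^ 2 / 2

noncomputable def switchedHalfSqDeriv (c z : ℝ) : ℝ := max z 0 + c * min z 0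

theorem switchedHalfSq_eq_ite (c z : ℝ) :
    switchedHalfSq c z = if 0 ≤ z then 1 / 2 * z ^ 2 else 1 / 2 * c * z ^ 2 := by
  unfold switchedHalfSq
  split_ifs with hz
  · rw [max_eq_left hz, min_eq_right hz]; ring
  · rw [max_eq_right (not_le.mp hz).le, min_eq_left (not_le.mp hz).le]; ring

theorem HasDerivAt.switchedHalfSq {c z : ℝ → ℝ} {c' z' t : ℝ} (hc : HasDerivAt c c' t)
    (hz : HasDerivAt z z' t) :
    HasDerivAt (fun s => switchedHalfSq (c s) (z s))
      (c' * min (z t) 0 ^ 2 / 2 + switchedHalfSqDeriv (c t) (z t) * z') t := by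
  have hmax := (hasDerivAt_max_zero_sq (z t)).comp t hz
  have hmin := (hasDerivAt_min_zero_sq (z t)).comp t hz
  exact ((hmax.div_const 2).add ((hc.mul hmin).div_const 2)).congr_deriv
    (by simp only [switchedHalfSqDeriv, Function.comp_apply]; ring)

theorem hasDerivAt_exp_mul_sub (k T t : ℝ) :
    HasDerivAt (fun s => exp (k * (T - s))) (-k * exp (k * (T - t))) t := by
  have := (((hasDerivAt_id t).const_sub T).const_mul k).exp
  simpa [mul_comm] using this

theorem stmt_7_general
    (T r : ℝ)
    (f : ℝ)
    (A₁ : ℝ)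
    (g₁ : ℝ → ℝ) (hg₁ : ∀ t, g₁ t = f * (exp (r * (T - t)) - 1) / r)
    (V : ℝ → ℝ → ℝ)
    (hV : ∀ t x, V t x =
      if 0 ≤ exp (r * (T - t)) * x + g₁ t
      then (1 / 2) * (exp (r * (T - t)) * x + g₁ t) ^ 2
      else (1 / 2) * exp (2 * A₁ * (T - t)) * (exp (r * (T - t)) * x + g₁ t) ^ 2) :
    ContinuousOn (fun p : ℝ × ℝ => V p.1 p.2) (Icc (0 : ℝ) T ×ˢ (univ : Set ℝ)) ∧
    ∃ Vt Vx : ℝ → ℝ → ℝ,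
      (∀ t x : ℝ, t ∈ Ioo (0 : ℝ) T →
        HasDerivAt (fun s => V s x) (Vt t x) t ∧ HasDerivAt (fun y => V t y) (Vx t x) x) ∧
      ContinuousOn (fun p : ℝ × ℝ => Vt p.1 p.2) (Ioo (0 : ℝ) T ×ˢ (univ : Set ℝ)) ∧
      ContinuousOn (fun p : ℝ × ℝ => Vx p.1 p.2) (Ioo (0 : ℝ) T ×ˢ (univ : Set ℝ)) ∧
      (∀ t x : ℝ, t ∈ Ioo (0 : ℝ) T → exp (r * (T - t)) * x + g₁ t = 0 →
        V t x = 0 ∧ Vt t x = 0 ∧ Vx t x = 0) := by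
  set H : ℝ → ℝ → ℝ := fun t x => exp (r * (T - t)) * x + g₁ t
  have hVH : V = fun t x => switchedHalfSq (exp (2 * A₁ * (T - t))) (H t x) := by
    ext t x; rw [hV, switchedHalfSq_eq_ite]
  have hg₁_cont : Continuous g₁ := by rw [funext hg₁]; fun_prop
  have hg₁_deriv (t : ℝ) : HasDerivAt g₁ (f * (-r * exp (r * (T - t))) / r) t := by
    rw [funext hg₁]; exact (((hasDerivAt_exp_mul_sub r T t).sub_const 1).const_mul f).div_const r
  have hH_t (t x : ℝ) : HasDerivAt (fun s => H s x)
      (-r * exp (r * (T - t)) * x + f * (-r * exp (r * (T - t))) / r) t :=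
    ((hasDerivAt_exp_mul_sub r T t).mul_const x).add (hg₁_deriv t)
  have hH_x (t x : ℝ) : HasDerivAt (H t) (exp (r * (T - t))) x :=
    (((hasDerivAt_id x).const_mul _).add_const (g₁ t)).congr_deriv (mul_one _)
  refine ⟨?_, fun t x => -(2 * A₁) * exp (2 * A₁ * (T - t)) * min (H t x) 0 ^ 2 / 2 +
      switchedHalfSqDeriv (exp (2 * A₁ * (T - t))) (H t x) *
        (-r * exp (r * (T - t)) * x + f * (-r * exp (r * (T - t))) / r),
    fun t x => switchedHalfSqDeriv (exp (2 * A₁ * (T - t))) (H t x) * exp (r * (T - t)),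
    fun t x _ => ⟨?_, ?_⟩, ?_, ?_, fun t x _ hHtx => ?_⟩
  · rw [hVH]; unfold switchedHalfSq; fun_prop
  · rw [hVH]; exact (hasDerivAt_exp_mul_sub (2 * A₁) T t).switchedHalfSq (hH_t t x)
  · rw [hVH]; simpa using (hasDerivAt_const x _).switchedHalfSq (hH_x t x)
  · unfold switchedHalfSqDeriv; fun_prop
  · unfold switchedHalfSqDeriv; fun_prop
  · simp [hVH, H, hHtx, switchedHalfSq, switchedHalfSqDeriv]

/-- V is continuous on [0,T]×ℝ, its first partial derivatives ∂ₜV, ∂ₓV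
exist on (0,T)×ℝ and are continuous there, and on the switching curve
e^{r(T−t)}x + g₁(t) = 0 one has V = 0, ∂ₜV = 0 and ∂ₓV = 0. -/
theorem stmt_7
    (T r μ σ a b η θ d γ : ℝ)
    (hT : 0 < T) (hr : 0 < r) (hσ : 0 < σ) (ha : 0 < a) (hb : 0 < b)
    (hη : 0 < η) (hμr : r < μ)
    (f : ℝ) (hf : f = a * θ - a * η + (d - γ) * r)
    (A₁ : ℝ) (hA₁ : A₁ = -(μ - r) ^ 2 / (2 * σ ^ 2) - a ^ 2 * η ^ 2 / (2 * b ^ 2))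
    (g₁ : ℝ → ℝ) (hg₁ : ∀ t, g₁ t = f * (exp (r * (T - t)) - 1) / r)
    (V : ℝ → ℝ → ℝ)
    (hV : ∀ t x, V t x =
      if 0 ≤ exp (r * (T - t)) * x + g₁ t
      then (1 / 2) * (exp (r * (T - t)) * x + g₁ t) ^ 2
      else (1 / 2) * exp (2 * A₁ * (T - t)) * (exp (r * (T - t)) * x + g₁ t) ^ 2) :
    ContinuousOn (fun p : ℝ × ℝ => V p.1 p.2) (Icc (0 : ℝ) T ×ˢ (univ : Set ℝ)) ∧
    ∃ Vt Vx : ℝ → ℝ → ℝ,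
      (∀ t x : ℝ, t ∈ Ioo (0 : ℝ) T →
        HasDerivAt (fun s => V s x) (Vt t x) t ∧ HasDerivAt (fun y => V t y) (Vx t x) x) ∧
      ContinuousOn (fun p : ℝ × ℝ => Vt p.1 p.2) (Ioo (0 : ℝ) T ×ˢ (univ : Set ℝ)) ∧
      ContinuousOn (fun p : ℝ × ℝ => Vx p.1 p.2) (Ioo (0 : ℝ) T ×ˢ (univ : Set ℝ)) ∧
      (∀ t x : ℝ, t ∈ Ioo (0 : ℝ) T → exp (r * (T - t)) * x + g₁ t = 0 →
        V t x = 0 ∧ Vt t x = 0 ∧ Vx t x = 0) :=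
  stmt_7_general T r f A₁ g₁ hg₁ V hV
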